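/- Let n ≥ 2, m ≥ 2, let σ : Fin m → Fin n be injective, and define Sub : Δ°ₙ → Δ°ₘ by Sub(λ) j = λ (σ j) / ∑ k, λ (σ k). Let p ≥ 1 and λ₁, …, λ_p ∈ Δ°ₙ. Then the arithmetic mean in the compositional vector space structure is subcompositionally coherent: Sub((1/p) ⊙ (λ₁ ⊕ ⋯ ⊕ λ_p)) = (1/p) ⊙ (Sub(λ₁) ⊕ ⋯ ⊕ Sub(λ_p)), where on the left ⊕ and ⊙ are the perturbation and powering of Δ°ₙ and on the right those of Δ°ₘ. Explicitly, both sides equal the vector whose j-th entry is (∏ₜ λₜ(σ j))^(1/p) / ∑ₖ (∏ₜ λₜ(σ k))^(1/p). -/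

import Mathlib

open Real Finset

/-- The open probability simplex. -/
def simplex' (d : ℕ) : Set (Fin d → ℝ) :=
  {l | (∀ i, 0 < l i) ∧ ∑ i, l i = 1}

/-- The perturbation operation on the open simplex. -/
noncomputable def pert (d : ℕ) (l m : Fin d → ℝ) : Fin d → ℝ :=
  fun i => l i * m i / ∑ j, l j * m j

/-- The powering operation on the open simplex (real powers via `Real.rpow`). -/
noncomputable def spow (d : ℕ) (c : ℝ) (l : Fin d → ℝ) : Fin d → ℝ :=
  fun i => l i ^ c / ∑ j, l j ^ c

/-- The subcomposition map `Sub : Δ°ₙ → Δ°ₘ` along an injective selection `σ`. -/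
noncomputable def subc (n m : ℕ) (σ : Fin m → Fin n) (l : Fin n → ℝ) : Fin m → ℝ :=
  fun j => l (σ j) / ∑ k, l (σ k)

/-- Iterated perturbation `l ⊕ m₁ ⊕ ⋯ ⊕ m_k` of a first element with a list. -/
noncomputable def pertIter (d : ℕ) (l : Fin d → ℝ) : List (Fin d → ℝ) → (Fin d → ℝ)
  | [] => l
  | m :: rest => pertIter d (pert d l m) rest

/-!
Up to a positive scalar, the iterated perturbation `λ₁ ⊕ ⋯ ⊕ λ_p` is the pointwise product
`∏ₜ λₜ`, since each step only divides by a positive normalising sum. Powering and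
subcomposition both end with a closure, so they are blind to positive scalars. Hence both sides
are the closure of `j ↦ (∏ₜ λₜ (σ j)) ^ (1/p)`: on the right, `Sub λₜ` differs from `λₜ ∘ σ`
only by the positive factor `(∑ₖ λₜ (σ k))⁻¹`.
-/

variable {d : ℕ}

theorem subc_const_mul {n m : ℕ} (σ : Fin m → Fin n) {a : ℝ} (ha : a ≠ 0) (g : Fin n → ℝ) :
    subc n m σ (fun i => a * g i) = subc n m σ g := by
  funext j
  simp only [subc, ← mul_sum]
  exact mul_div_mul_left _ _ ha

theorem spow_const_mul (c : ℝ) {a : ℝ} (ha : 0 < a) {g : Fin d → ℝ} (hg : ∀ i, 0 ≤ g i) :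
    spow d c (fun i => a * g i) = spow d c g := by
  have hmul (j) : (a * g j) ^ c = a ^ c * g j ^ c := mul_rpow ha.le (hg j)
  funext i
  simp only [spow, hmul, ← mul_sum]
  exact mul_div_mul_left _ _ (rpow_pos_of_pos ha c).ne'

theorem subc_spow {n m : ℕ} (σ : Fin m → Fin n) (c : ℝ) {g : Fin n → ℝ}
    (hg : ∑ i, g i ^ c ≠ 0) :
    subc n m σ (spow n c g) = spow m c (fun j => g (σ j)) := by
  have h : spow n c g = fun i => (∑ i, g i ^ c)⁻¹ * g i ^ c := funext fun i => div_eq_inv_mul _ _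
  rw [h, subc_const_mul σ (inv_ne_zero hg)]
  rfl

theorem prod_subc_apply {n m : ℕ} (σ : Fin m → Fin n) {ι : Type*} [Fintype ι]
    (f : ι → Fin n → ℝ) (j : Fin m) :
    ∏ t, subc n m σ (f t) j = (∏ t, (∑ k, f t (σ k))⁻¹) * ∏ t, f t (σ j) := by
  simp only [subc, div_eq_inv_mul, prod_mul_distrib]

theorem exists_pertIter_eq_const_mul_prod [NeZero d] {l : Fin d → ℝ} (hl : ∀ i, 0 < l i)
    {ms : List (Fin d → ℝ)} (hms : ∀ g ∈ ms, ∀ i, 0 < g i) :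
    ∃ a > 0, pertIter d l ms = fun i => a * (l i * (ms.map fun g => g i).prod) := by
  induction ms generalizing l with
  | nil => exact ⟨1, one_pos, by simp [pertIter]⟩
  | cons g rest ih =>
    have hg : ∀ i, 0 < g i := hms g List.mem_cons_self
    have hS : 0 < ∑ j, l j * g j := sum_pos (fun j _ => mul_pos (hl j) (hg j)) univ_nonempty
    obtain ⟨a, ha, hrest⟩ := ih (l := pert d l g) (fun i => div_pos (mul_pos (hl i) (hg i)) hS)
      (fun g' hg' => hms g' (List.mem_cons_of_mem _ hg'))
    refine ⟨a / ∑ j, l j * g j, div_pos ha hS, funext fun i => ?_⟩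
    simp only [pertIter, hrest, pert, List.map_cons, List.prod_cons]
    ring

theorem exists_pertIter_ofFn_eq_const_mul_prod [NeZero d] {p : ℕ} {f : Fin (p + 1) → Fin d → ℝ}
    (hf : ∀ t i, 0 < f t i) :
    ∃ a > 0, pertIter d (f 0) (List.ofFn fun t : Fin p => f t.succ) = fun i => a * ∏ t, f t i := by
  have hsucc : ∀ g ∈ List.ofFn (fun t : Fin p => f t.succ), ∀ i, 0 < g i := by
    simpa [List.mem_ofFn] using fun t : Fin p => hf t.succ
  obtain ⟨a, ha, h⟩ := exists_pertIter_eq_const_mul_prod (hf 0) hsucc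
  refine ⟨a, ha, ?_⟩
  simp only [h, List.map_ofFn, List.prod_ofFn, Function.comp_def, Fin.prod_univ_succ]

theorem stmt15_general (n m : ℕ) (hn : 2 ≤ n) (hm : 2 ≤ m)
    (σ : Fin m → Fin n)
    (p : ℕ) (lam : Fin (p + 1) → Fin n → ℝ)
    (hlam : ∀ t, lam t ∈ simplex' n) :
    subc n m σ (spow n (1 / (p + 1 : ℝ))
        (pertIter n (lam 0) (List.ofFn fun t : Fin p => lam t.succ)))
      = spow m (1 / (p + 1 : ℝ))
          (pertIter m (subc n m σ (lam 0))
            (List.ofFn fun t : Fin p => subc n m σ (lam t.succ))) ∧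
    subc n m σ (spow n (1 / (p + 1 : ℝ))
        (pertIter n (lam 0) (List.ofFn fun t : Fin p => lam t.succ)))
      = fun j => (∏ t, lam t (σ j)) ^ (1 / (p + 1 : ℝ)) /
          ∑ k, (∏ t, lam t (σ k)) ^ (1 / (p + 1 : ℝ)) := by
  have : NeZero n := ⟨by omega⟩
  have : NeZero m := ⟨by omega⟩
  set c : ℝ := 1 / (p + 1 : ℝ)
  have hlam_pos (t) (i) : 0 < lam t i := (hlam t).1 i
  have hprod_pos (i) : 0 < ∏ t, lam t i := prod_pos fun t _ => hlam_pos t i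
  have hgeom : subc n m σ (spow n c (pertIter n (lam 0) (List.ofFn fun t : Fin p => lam t.succ)))
      = spow m c (fun j => ∏ t, lam t (σ j)) := by
    obtain ⟨a, ha, h⟩ := exists_pertIter_ofFn_eq_const_mul_prod hlam_pos
    rw [h, spow_const_mul c ha fun i => (hprod_pos i).le]
    exact subc_spow σ c (sum_pos (fun i _ => rpow_pos_of_pos (hprod_pos i) c) univ_nonempty).ne'
  have hsub : spow m c (pertIter m (subc n m σ (lam 0))
      (List.ofFn fun t : Fin p => subc n m σ (lam t.succ)))
      = spow m c (fun j => ∏ t, lam t (σ j)) := by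
    have hsum_pos (t) : 0 < ∑ k, lam t (σ k) := sum_pos (fun k _ => hlam_pos t (σ k)) univ_nonempty
    obtain ⟨a, ha, h⟩ := exists_pertIter_ofFn_eq_const_mul_prod (f := fun t => subc n m σ (lam t))
      fun t j => div_pos (hlam_pos t (σ j)) (hsum_pos t)
    simp only [h, prod_subc_apply, ← mul_assoc]
    exact spow_const_mul c (mul_pos ha (prod_pos fun t _ => inv_pos.mpr (hsum_pos t)))
      fun j => (hprod_pos (σ j)).le
  exact ⟨hgeom.trans hsub.symm, hgeom⟩

/-- subcompositional coherence of the compositional arithmetic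
mean: `Sub((1/p) ⊙ (λ₁ ⊕ ⋯ ⊕ λ_p)) = (1/p) ⊙ (Sub λ₁ ⊕ ⋯ ⊕ Sub λ_p)`, and both
sides are given by the explicit reclosed geometric-mean formula.  (The number
of data points is `p + 1 ≥ 1`.) -/
theorem stmt15 (n m : ℕ) (hn : 2 ≤ n) (hm : 2 ≤ m)
    (σ : Fin m → Fin n) (hσ : Function.Injective σ)
    (p : ℕ) (lam : Fin (p + 1) → Fin n → ℝ)
    (hlam : ∀ t, lam t ∈ simplex' n) :
    subc n m σ (spow n (1 / (p + 1 : ℝ))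
        (pertIter n (lam 0) (List.ofFn fun t : Fin p => lam t.succ)))
      = spow m (1 / (p + 1 : ℝ))
          (pertIter m (subc n m σ (lam 0))
            (List.ofFn fun t : Fin p => subc n m σ (lam t.succ))) ∧
    subc n m σ (spow n (1 / (p + 1 : ℝ))
        (pertIter n (lam 0) (List.ofFn fun t : Fin p => lam t.succ)))
      = fun j => (∏ t, lam t (σ j)) ^ (1 / (p + 1 : ℝ)) /
          ∑ k, (∏ t, lam t (σ k)) ^ (1 / (p + 1 : ℝ)) :=
  stmt15_general n m hn hm σ p lam hlam
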